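/- Any committee W of size k maximizing the PAV score satisfies: for every positive integer ℓ and every ℓ-cohesive group V, the average satisfaction of V with respect to W is strictly greater than ℓ−1. Consequently, every PAV-optimal committee provides EJR. -/

import Mathlib

open Finset

/-- Average satisfaction of a group `V` of voters w.r.t. committee `W`:
`(1/|V|) * Σ_{i∈V} |A_i ∩ W|`. -/
def avgSat {ι α : Type*} [DecidableEq α] (A : ι → Finset α) (W : Finset α)
    (V : Finset ι) : ℚ :=
  (∑ i ∈ V, ((A i ∩ W).card : ℚ)) / V.card

/-- `V` is an `ℓ`-cohesive group of voters (w.r.t. electorate `N` and committee size `k`):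
`V ⊆ N`, `|V| ≥ ⌈ℓ·n/k⌉` and the voters in `V` jointly approve at least `ℓ` candidates. -/
def Cohesive {ι α : Type*} [DecidableEq α] (N : Finset ι) (A : ι → Finset α)
    (k ℓ : ℕ) (V : Finset ι) : Prop :=
  V ⊆ N ∧ (⌈(ℓ * N.card : ℚ) / k⌉ : ℚ) ≤ V.card ∧
    ∃ T : Finset α, ℓ ≤ T.card ∧ ∀ i ∈ V, T ⊆ A i

/-- The PAV score of committee `W`: `Σ_{i∈N} Σ_{j=1}^{|A_i ∩ W|} 1/j`. -/
def pavSc {ι α : Type*} [DecidableEq α] (N : Finset ι) (A : ι → Finset α)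
    (W : Finset α) : ℚ :=
  ∑ i ∈ N, ∑ j ∈ Finset.range (A i ∩ W).card, (1 : ℚ) / (j + 1)

/-- `W` provides extended justified representation: every `ℓ`-cohesive group
contains a voter approving at least `ℓ` members of `W`. -/
def EJR {ι α : Type*} [DecidableEq α] (N : Finset ι) (A : ι → Finset α)
    (k : ℕ) (W : Finset α) : Prop :=
  ∀ ℓ : ℕ, 0 < ℓ → ∀ V : Finset ι, Cohesive N A k ℓ V → ∃ i ∈ V, ℓ ≤ (A i ∩ W).card


lemma pav_insert {ι α : Type*} [DecidableEq α] (N : Finset ι) (A : ι → Finset α)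
    (W : Finset α) (c : α) (hc : c ∉ W) :
    pavSc N A (insert c W) = pavSc N A W +
      ∑ i ∈ N, (if c ∈ A i then (1:ℚ)/((A i ∩ W).card + 1) else 0) := by
  unfold pavSc
  rw [← Finset.sum_add_distrib]
  refine Finset.sum_congr rfl fun i _ => ?_
  by_cases h : c ∈ A i
  · have h1 : A i ∩ insert c W = insert c (A i ∩ W) := by
      ext x; simp only [mem_inter, mem_insert]
      constructor
      · rintro ⟨hx, rfl | hx2⟩
        · exact Or.inl rfl
        · exact Or.inr ⟨hx, hx2⟩
      · rintro (rfl | ⟨hx, hx2⟩)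
        · exact ⟨h, Or.inl rfl⟩
        · exact ⟨hx, Or.inr hx2⟩
    rw [h1, Finset.card_insert_of_notMem (by simp [hc]), Finset.sum_range_succ]
    simp [h]
  · have h1 : A i ∩ insert c W = A i ∩ W := by
      ext x; simp only [mem_inter, mem_insert]
      constructor
      · rintro ⟨hx, rfl | hx2⟩
        · exact absurd hx h
        · exact ⟨hx, hx2⟩
      · rintro ⟨hx, hx2⟩
        exact ⟨hx, Or.inr hx2⟩
    simp [h1, h]

lemma pav_erase {ι α : Type*} [DecidableEq α] (N : Finset ι) (A : ι → Finset α)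
    (W : Finset α) (w : α) (hw : w ∈ W) :
    pavSc N A (W.erase w) = pavSc N A W -
      ∑ i ∈ N, (if w ∈ A i then (1:ℚ)/((A i ∩ W).card) else 0) := by
  unfold pavSc
  rw [← Finset.sum_sub_distrib]
  refine Finset.sum_congr rfl fun i _ => ?_
  have h1 : A i ∩ W.erase w = (A i ∩ W).erase w := by
    ext x; simp only [mem_inter, mem_erase]; tauto
  by_cases h : w ∈ A i
  · have hwm : w ∈ A i ∩ W := mem_inter.2 ⟨h, hw⟩
    obtain ⟨m, hm⟩ : ∃ m, (A i ∩ W).card = m + 1 :=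
      ⟨(A i ∩ W).card - 1, (Nat.succ_pred_eq_of_pos (card_pos.2 ⟨w, hwm⟩)).symm⟩
    rw [h1, Finset.card_erase_of_mem hwm, hm]
    simp only [Nat.add_sub_cancel, Finset.sum_range_succ, h, if_true]
    push_cast
    ring
  · rw [h1, Finset.erase_eq_of_notMem (by simp [h]), if_neg h, sub_zero]

lemma tangent_ineq (x l : ℚ) (hx : 0 < x) (hl : 0 < l) :
    2/l - x/l^2 ≤ 1/x := by
  rw [div_sub_div _ _ (ne_of_gt hl) (ne_of_gt (pow_pos hl 2)), div_le_div_iff₀ (by positivity) hx]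
  nlinarith [sq_nonneg (x - l)]


/-- Every PAV-score-maximizing committee gives every ℓ-cohesive group average
satisfaction strictly greater than ℓ-1; consequently it provides EJR. -/
theorem pav_optimal_high_average_satisfaction_and_EJR {ι α : Type*} [DecidableEq α]
    (N : Finset ι) (hN : N.Nonempty) (A : ι → Finset α) (C : Finset α)
    (hA : ∀ i ∈ N, A i ⊆ C) (k : ℕ) (hk : 0 < k)
    (W : Finset α) (hWC : W ⊆ C) (hW : W.card = k)
    (hopt : ∀ W' ⊆ C, W'.card = k → pavSc N A W' ≤ pavSc N A W) :
    (∀ ℓ : ℕ, 0 < ℓ → ∀ V : Finset ι, Cohesive N A k ℓ V →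
      (ℓ : ℚ) - 1 < avgSat A W V) ∧ EJR N A k W := by
  have hn : (0:ℚ) < N.card := by exact_mod_cast card_pos.2 hN
  have hkq : (0:ℚ) < (k:ℚ) := by exact_mod_cast hk
  have main : ∀ ℓ : ℕ, 0 < ℓ → ∀ V : Finset ι, Cohesive N A k ℓ V →
      (ℓ : ℚ) - 1 < avgSat A W V := by
    intro ℓ hℓ V hcoh
    obtain ⟨hVN, hVcard, T, hT, hTA⟩ := hcoh
    have hlq : (0:ℚ) < (ℓ:ℚ) := by exact_mod_cast hℓ
    have hq : (0:ℚ) < (ℓ * N.card : ℚ) / k := by positivity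
    have hVpos : (0:ℚ) < V.card := lt_of_lt_of_le hq (le_trans (Int.le_ceil _) hVcard)
    have hVpos' : 0 < V.card := by exact_mod_cast hVpos
    have hVne : V.Nonempty := card_pos.1 hVpos'
    by_contra hcon
    push_neg at hcon
    unfold avgSat at hcon
    have hsum : ∑ i ∈ V, ((A i ∩ W).card : ℚ) ≤ ((ℓ:ℚ) - 1) * V.card :=
      (div_le_iff₀ hVpos).1 hcon
    -- find a voter with low satisfaction
    obtain ⟨i0, hi0V, hi0⟩ : ∃ i ∈ V, ((A i ∩ W).card : ℚ) ≤ (ℓ:ℚ) - 1 := by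
      by_contra hc2
      push_neg at hc2
      have h1 : ∑ i ∈ V, ((ℓ:ℚ) - 1) < ∑ i ∈ V, ((A i ∩ W).card : ℚ) :=
        Finset.sum_lt_sum_of_nonempty hVne hc2
      rw [Finset.sum_const, nsmul_eq_mul, mul_comm] at h1
      linarith
    -- find c ∈ T \ W
    have hTW : ¬ T ⊆ W := by
      intro hsub
      have h1 : T ⊆ A i0 ∩ W := subset_inter (hTA i0 hi0V) hsub
      have h2 : (ℓ:ℚ) ≤ ((A i0 ∩ W).card : ℚ) := by
        exact_mod_cast le_trans hT (card_le_card h1)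
      linarith
    obtain ⟨c, hcT, hcW⟩ := not_subset.1 hTW
    have hcC : c ∈ C := hA i0 (hVN hi0V) (hTA i0 hi0V hcT)
    have hcA : ∀ i ∈ V, c ∈ A i := fun i hi => hTA i hi hcT
    -- gain bound
    have hGain : ((N.card : ℚ) / k : ℚ) ≤
        ∑ i ∈ N, (if c ∈ A i then (1:ℚ)/((A i ∩ W).card + 1) else 0) := by
      have h1 : ∑ i ∈ V, (1:ℚ)/((A i ∩ W).card + 1) ≤
          ∑ i ∈ N, (if c ∈ A i then (1:ℚ)/((A i ∩ W).card + 1) else 0) := by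
        have e1 : ∑ i ∈ V, (1:ℚ)/((A i ∩ W).card + 1) =
            ∑ i ∈ V, (if c ∈ A i then (1:ℚ)/((A i ∩ W).card + 1) else 0) :=
          Finset.sum_congr rfl fun i hi => by rw [if_pos (hcA i hi)]
        rw [e1]
        refine Finset.sum_le_sum_of_subset_of_nonneg hVN fun i _ _ => ?_
        split_ifs
        · positivity
        · exact le_refl 0
      have h2 : (V.card : ℚ)/ℓ ≤ ∑ i ∈ V, (1:ℚ)/((A i ∩ W).card + 1) := by
        have h3 : ∀ i ∈ V, 2/(ℓ:ℚ) - (((A i ∩ W).card : ℚ)+1)/(ℓ:ℚ)^2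
            ≤ (1:ℚ)/((A i ∩ W).card + 1) := fun i _ =>
          tangent_ineq _ _ (by positivity) hlq
        have h4 : ∑ i ∈ V, (2/(ℓ:ℚ) - (((A i ∩ W).card : ℚ)+1)/(ℓ:ℚ)^2) ≤
            ∑ i ∈ V, (1:ℚ)/((A i ∩ W).card + 1) := Finset.sum_le_sum h3
        have e2 : ∑ i ∈ V, (2/(ℓ:ℚ) - (((A i ∩ W).card : ℚ)+1)/(ℓ:ℚ)^2) =
            (V.card : ℚ) * (2/(ℓ:ℚ)) -
              (∑ i ∈ V, ((A i ∩ W).card : ℚ) + V.card)/(ℓ:ℚ)^2 := by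
          rw [Finset.sum_sub_distrib, Finset.sum_const, nsmul_eq_mul, ← Finset.sum_div,
            Finset.sum_add_distrib, Finset.sum_const, nsmul_eq_mul, mul_one]
        rw [e2] at h4
        have h5 : (∑ i ∈ V, ((A i ∩ W).card : ℚ) + V.card)/(ℓ:ℚ)^2 ≤
            ((ℓ:ℚ) * V.card)/(ℓ:ℚ)^2 := by
          apply div_le_div_of_nonneg_right ?_ (by positivity)
          · linarith
        have e3 : ((ℓ:ℚ) * V.card)/(ℓ:ℚ)^2 = (V.card : ℚ)/ℓ := by
          field_simp
        rw [e3] at h5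
        have e4 : (V.card : ℚ) * (2/(ℓ:ℚ)) = 2 * ((V.card : ℚ)/ℓ) := by ring
        rw [e4] at h4
        linarith
      have h6 : ((N.card : ℚ) / k : ℚ) ≤ (V.card : ℚ)/ℓ := by
        rw [div_le_div_iff₀ hkq hlq]
        have h7 : ((ℓ:ℚ) * N.card) / k ≤ (V.card : ℚ) :=
          le_trans (Int.le_ceil _) hVcard
        rw [div_le_iff₀ hkq] at h7
        nlinarith
      linarith
    -- loss bound
    set W2 : Finset α := insert c W with hW2
    have hW2card : W2.card = k + 1 := by rw [hW2, card_insert_of_notMem hcW, hW]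
    have hLosssum : ∑ w ∈ W, (∑ i ∈ N, if w ∈ A i then (1:ℚ)/((A i ∩ W2).card) else 0)
        < (N.card : ℚ) := by
      rw [Finset.sum_comm]
      have key : ∀ i ∈ N, (∑ w ∈ W, if w ∈ A i then (1:ℚ)/((A i ∩ W2).card) else 0)
          = ((A i ∩ W).card : ℚ) / ((A i ∩ W2).card : ℚ) := by
        intro i _
        rw [← Finset.sum_filter, Finset.sum_const, Finset.filter_mem_eq_inter,
          Finset.inter_comm, nsmul_eq_mul, mul_one_div]
      rw [Finset.sum_congr rfl key]
      have hle : ∀ i ∈ N, ((A i ∩ W).card : ℚ) / ((A i ∩ W2).card : ℚ) ≤ 1 := by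
        intro i _
        have hsub : A i ∩ W ⊆ A i ∩ W2 :=
          inter_subset_inter (Finset.Subset.refl _) (subset_insert c W)
        rcases Nat.eq_zero_or_pos (A i ∩ W2).card with h0 | hpos
        · have : (A i ∩ W).card = 0 := Nat.le_zero.1 (h0 ▸ card_le_card hsub)
          simp [this, h0]
        · rw [div_le_one (by exact_mod_cast hpos)]
          exact_mod_cast card_le_card hsub
      have hi0N : i0 ∈ N := hVN hi0V
      have hstrict : ((A i0 ∩ W).card : ℚ) / ((A i0 ∩ W2).card : ℚ) < 1 := by
        have e5 : A i0 ∩ W2 = insert c (A i0 ∩ W) := by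
          rw [hW2]
          ext x
          simp only [mem_inter, mem_insert]
          constructor
          · rintro ⟨hx, rfl | hx2⟩
            · exact Or.inl rfl
            · exact Or.inr ⟨hx, hx2⟩
          · rintro (rfl | ⟨hx, hx2⟩)
            · exact ⟨hcA i0 hi0V, Or.inl rfl⟩
            · exact ⟨hx, Or.inr hx2⟩
        have e6 : ((A i0 ∩ W2).card : ℚ) = ((A i0 ∩ W).card : ℚ) + 1 := by
          rw [e5, card_insert_of_notMem (fun h => hcW (mem_inter.1 h).2)]
          push_cast; ring
        rw [e6, div_lt_one (by positivity)]
        linarith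
      calc ∑ i ∈ N, ((A i ∩ W).card : ℚ) / ((A i ∩ W2).card : ℚ)
          < ∑ _i ∈ N, (1:ℚ) := Finset.sum_lt_sum hle ⟨i0, hi0N, hstrict⟩
        _ = (N.card : ℚ) := by rw [Finset.sum_const, nsmul_eq_mul, mul_one]
    obtain ⟨w0, hw0W, hw0⟩ : ∃ w ∈ W,
        (∑ i ∈ N, if w ∈ A i then (1:ℚ)/((A i ∩ W2).card) else 0) < (N.card : ℚ) / k := by
      by_contra hc3
      push_neg at hc3
      have h8 : ∑ w ∈ W, ((N.card : ℚ) / k) ≤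
          ∑ w ∈ W, (∑ i ∈ N, if w ∈ A i then (1:ℚ)/((A i ∩ W2).card) else 0) :=
        Finset.sum_le_sum hc3
      rw [Finset.sum_const, hW, nsmul_eq_mul] at h8
      have e7 : (k:ℚ) * ((N.card : ℚ) / k) = (N.card : ℚ) := by field_simp
      rw [e7] at h8
      linarith
    have hw0W2 : w0 ∈ W2 := mem_insert_of_mem hw0W
    have hW'card : (W2.erase w0).card = k := by
      rw [card_erase_of_mem hw0W2, hW2card]
      omega
    have hW'C : W2.erase w0 ⊆ C := (erase_subset _ _).trans (insert_subset hcC hWC)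
    have hle2 := hopt _ hW'C hW'card
    rw [pav_erase N A W2 w0 hw0W2, hW2, pav_insert N A W c hcW] at hle2
    rw [← hW2] at hle2
    linarith
  refine ⟨main, ?_⟩
  intro ℓ hℓ V hcoh
  have havg := main ℓ hℓ V hcoh
  obtain ⟨hVN, hVcard, T, hT, hTA⟩ := hcoh
  have hlq : (0:ℚ) < (ℓ:ℚ) := by exact_mod_cast hℓ
  have hq : (0:ℚ) < (ℓ * N.card : ℚ) / k := by positivity
  have hVpos : (0:ℚ) < V.card := lt_of_lt_of_le hq (le_trans (Int.le_ceil _) hVcard)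
  by_contra hc
  push_neg at hc
  have h9 : avgSat A W V ≤ (ℓ:ℚ) - 1 := by
    unfold avgSat
    rw [div_le_iff₀ hVpos]
    calc ∑ i ∈ V, ((A i ∩ W).card : ℚ) ≤ ∑ i ∈ V, ((ℓ:ℚ) - 1) := by
          refine Finset.sum_le_sum fun i hi => ?_
          have h10 : ((A i ∩ W).card : ℚ) + 1 ≤ (ℓ:ℚ) := by
            exact_mod_cast Nat.succ_le_of_lt (hc i hi)
          linarith
      _ = ((ℓ:ℚ) - 1) * V.card := by rw [Finset.sum_const, nsmul_eq_mul, mul_comm]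
  linarith
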